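/- arXiv:1805.12571 — 2 statements merged into one kernel-verified Lean document; each statement's English description precedes it below -/
import Mathlib

section
/- Let p ≥ 1, let X : Fin p → Type be a family of finite types, let L ℓ : X(ℓ+1) → X(ℓ) → ℝ (for ℓ = 0, …, p−2) be nonnegative functions, and let γ : X(p−1) → ℝ be any function. Define the unnormalised path density η̄(x) := γ(x(p−1)) · ∏_{ℓ=0}^{p−2} L ℓ (x(ℓ+1), x(ℓ)) for x ∈ ∏_ℓ X(ℓ), and the refreshment kernel G(x, y) := [if y(p−1) = x(p−1) then 1 else 0] · ∏_{ℓ=0}^{p−2} L ℓ (y(ℓ+1), y(ℓ)). Then detailed balance holds: for all paths x, y, η̄(x) · G(x, y) = η̄(y) · G(y, x). That is, the systematic refreshment kernel, which keeps the last coordinate fixed and redraws the earlier coordinates from the retrospective Markov dynamics, is reversible with respect to the extended path target. -/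
/-- Detailed balance (reversibility) of the systematic refreshment kernel: the kernel
`G(x, y)` that keeps the last coordinate fixed and redraws the earlier coordinates
according to the retrospective dynamics `L ℓ` is reversible with respect to the extended
path target `η̄(x) = γ(x_p) ∏_ℓ L_ℓ(x_{ℓ+1}, x_ℓ)`. -/
theorem refreshment_kernel_detailed_balance
    (p : ℕ) (hp : 1 ≤ p) (X : ℕ → Type) [∀ i, Fintype (X i)]
    [DecidableEq (X (p - 1))]
    (L : ∀ ℓ : ℕ, X (ℓ + 1) → X ℓ → ℝ)
    (hL0 : ∀ ℓ, ℓ < p - 1 → ∀ (x' : X (ℓ + 1)) (x : X ℓ), 0 ≤ L ℓ x' x)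
    (γ : X (p - 1) → ℝ)
    (η : (∀ i : Fin p, X i) → ℝ)
    (hη : ∀ x, η x = γ (x ⟨p - 1, by omega⟩) *
        ∏ ℓ : Fin (p - 1),
          L ℓ.val (x ⟨ℓ.val + 1, by have := ℓ.isLt; omega⟩)
            (x ⟨ℓ.val, by have := ℓ.isLt; omega⟩))
    (Gk : (∀ i : Fin p, X i) → (∀ i : Fin p, X i) → ℝ)
    (hG : ∀ x y, Gk x y =
        (if y ⟨p - 1, by omega⟩ = x ⟨p - 1, by omega⟩ then (1 : ℝ) else 0) *
          ∏ ℓ : Fin (p - 1),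
            L ℓ.val (y ⟨ℓ.val + 1, by have := ℓ.isLt; omega⟩)
              (y ⟨ℓ.val, by have := ℓ.isLt; omega⟩)) :
    ∀ x y, η x * Gk x y = η y * Gk y x := by
  intro x y
  rw [hη x, hη y, hG x y, hG y x]
  by_cases h : y ⟨p - 1, by omega⟩ = x ⟨p - 1, by omega⟩
  · rw [if_pos h, if_pos h.symm, h]
    ring
  · rw [if_neg h, if_neg (fun h' => h h'.symm)]
    ring
end

section
/- Let X and Y be finite types and N ≥ 1. Let γX : X → ℝ and γY : Y → ℝ be nonnegative unnormalised densities, L : Y → X → ℝ a nonnegative backward kernel, and K : X → Y → ℝ a nonnegative proposal kernel. Define Q(x, y) := γY(y) L(y, x) / γX(x) for γX(x) > 0 and the weight function w(x, y) := γY(y) L(y, x) / (γX(x) K(x, y)) whenever γX(x) > 0 and K(x, y) > 0. Let ξ : Fin N → X be particles with γX(ξ_i) > 0 for all i, and ω : Fin N → ℝ strictly positive weights, and suppose Z := ∑_{ℓ} ω_ℓ · (∑_{y'} Q(ξ_ℓ, y')) > 0. Define the extended target η̌(i, y) := ω_i Q(ξ_i, y) / Z on Fin N × Y and the proposal ρ(i,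 y) := (ω_i / ∑_ℓ ω_ℓ) · K(ξ_i, y). Then for every (i, y) with ρ(i, y) > 0, η̌(i, y) / ρ(i, y) = c · w(ξ_i, y), where the constant c = (∑_ℓ ω_ℓ) / Z does not depend on (i, y). Hence the importance weight function w is, up to a normalising constant, the Radon–Nikodym derivative of the extended target mixture with respect to the mixture proposal. -/
/-! On the extended space the common factor `ω_i` of target and proposal cancels, so
`η̌(i, y) / ρ(i, y) = (Ω / Z) · Q(ξ_i, y) / K(ξ_i, y)`, and `Q(ξ_i, y) / K(ξ_i, y)` is the
weight `w(ξ_i, y)` once `γX(ξ_i) > 0` and `K(ξ_i, y) > 0`; the latter holds wherever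
`ρ(i, y) > 0`, since every mixture weight `ω_i / Ω` is positive. -/

theorem div_sum_pos {ι : Type*} [Fintype ι] {ω : ι → ℝ} (hω : ∀ i, 0 < ω i) (i : ι) :
    0 < ω i / ∑ ℓ, ω ℓ :=
  div_pos (hω i) (Finset.sum_pos (fun ℓ _ => hω ℓ) ⟨i, Finset.mem_univ i⟩)

-- With `x / 0 = 0`, both sides vanish together when `Z`, `Ω` or `k` is zero.
theorem mixture_ratio_eq {F : Type*} [Field F] {a q k Z Ω : F} (ha : a ≠ 0) :
    a * q / Z / (a / Ω * k) = Ω / Z * (q / k) := by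
  field_simp

theorem smc_importance_weights_correct_general
    {X Y : Type} (N : ℕ)
    (γX : X → ℝ) (γY : Y → ℝ) (L : Y → X → ℝ) (K : X → Y → ℝ)
    (Q : X → Y → ℝ)
    (hQ : ∀ x y, Q x y = if 0 < γX x then γY y * L y x / γX x else 0)
    (w : X → Y → ℝ)
    (hw : ∀ x y, 0 < γX x → 0 < K x y → w x y = γY y * L y x / (γX x * K x y))
    (ξ : Fin N → X) (hξ : ∀ i, 0 < γX (ξ i))
    (ω : Fin N → ℝ) (hω : ∀ i, 0 < ω i)
    (Z : ℝ)
    (ηc : Fin N × Y → ℝ)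
    (hηc : ∀ (i : Fin N) (y : Y), ηc (i, y) = ω i * Q (ξ i) y / Z)
    (ρ : Fin N × Y → ℝ)
    (hρ : ∀ (i : Fin N) (y : Y), ρ (i, y) = (ω i / ∑ ℓ : Fin N, ω ℓ) * K (ξ i) y) :
    ∀ (i : Fin N) (y : Y), 0 < ρ (i, y) →
      ηc (i, y) / ρ (i, y) = ((∑ ℓ : Fin N, ω ℓ) / Z) * w (ξ i) y := by
  intro i y hρpos
  have hKpos : 0 < K (ξ i) y :=
    pos_of_mul_pos_right (hρ i y ▸ hρpos) (div_sum_pos hω i).le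
  rw [hηc, hρ, hw _ _ (hξ i) hKpos, mixture_ratio_eq (hω i).ne', hQ, if_pos (hξ i), div_div]

/-- Correctness of the SMC importance weights: the Radon–Nikodym derivative of the
extended target mixture `η̌(i, y) = ω_i Q(ξ_i, y) / Z` with respect to the mixture
proposal `ρ(i, y) = (ω_i / Ω) K(ξ_i, y)` equals, up to the constant `Ω / Z` not
depending on `(i, y)`, the weight function
`w(x, y) = γY(y) L(y, x) / (γX(x) K(x, y))`. -/
theorem smc_importance_weights_correct
    {X Y : Type} [Fintype X] [Fintype Y] (N : ℕ) (hN : 1 ≤ N)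
    (γX : X → ℝ) (γY : Y → ℝ) (L : Y → X → ℝ) (K : X → Y → ℝ)
    (hγX : ∀ x, 0 ≤ γX x) (hγY : ∀ y, 0 ≤ γY y)
    (hL : ∀ y x, 0 ≤ L y x) (hK : ∀ x y, 0 ≤ K x y)
    (Q : X → Y → ℝ)
    (hQ : ∀ x y, Q x y = if 0 < γX x then γY y * L y x / γX x else 0)
    (w : X → Y → ℝ)
    (hw : ∀ x y, 0 < γX x → 0 < K x y → w x y = γY y * L y x / (γX x * K x y))
    (ξ : Fin N → X) (hξ : ∀ i, 0 < γX (ξ i))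
    (ω : Fin N → ℝ) (hω : ∀ i, 0 < ω i)
    (Z : ℝ) (hZdef : Z = ∑ ℓ : Fin N, ω ℓ * ∑ y' : Y, Q (ξ ℓ) y') (hZ : 0 < Z)
    (ηc : Fin N × Y → ℝ)
    (hηc : ∀ (i : Fin N) (y : Y), ηc (i, y) = ω i * Q (ξ i) y / Z)
    (ρ : Fin N × Y → ℝ)
    (hρ : ∀ (i : Fin N) (y : Y), ρ (i, y) = (ω i / ∑ ℓ : Fin N, ω ℓ) * K (ξ i) y) :
    ∀ (i : Fin N) (y : Y), 0 < ρ (i, y) →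
      ηc (i, y) / ρ (i, y) = ((∑ ℓ : Fin N, ω ℓ) / Z) * w (ξ i) y :=
  smc_importance_weights_correct_general N γX γY L K Q hQ w hw ξ hξ ω hω Z ηc hηc ρ hρ
end
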